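/- For every natural number n ≥ 4, the number of integers k with 1 ≤ k ≤ n such that 1/k is strictly greater than the arithmetic mean (1/n)·∑_{i=1}^{n} 1/i is strictly less than n/2; that is, fewer than half of the numbers 1, 1/2, 1/3, ..., 1/n exceed their mean, so there are far more small numbers than large ones in this set. -/
import Mathlib


open Finset

/-- For `n ≥ 4`, fewer than half of the numbers `1, 1/2, …, 1/n` exceed their
arithmetic mean `(1/n) ∑_{i=1}^n 1/i`: far more small numbers than large ones. -/
theorem zipf_head_minority (n : ℕ) (hn : 4 ≤ n) :
    (((Icc 1 n).filter fun k : ℕ =>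
        (1 : ℝ) / (k : ℝ) > (1 / (n : ℝ)) * ∑ i ∈ Icc 1 n, (1 : ℝ) / (i : ℝ)).card : ℝ) <
      (n : ℝ) / 2 := by
  have hn0 : (0 : ℝ) < n := by positivity
  -- H_n ≥ 2
  have hH : (2 : ℝ) ≤ ∑ i ∈ Icc 1 n, (1 : ℝ) / (i : ℝ) := by
    have hsub : Icc 1 4 ⊆ Icc 1 n := Icc_subset_Icc le_rfl hn
    have h4 : (2 : ℝ) ≤ ∑ i ∈ Icc (1:ℕ) 4, (1 : ℝ) / (i : ℝ) := by
      rw [show Icc (1:ℕ) 4 = {1,2,3,4} from rfl]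
      norm_num
    refine h4.trans (Finset.sum_le_sum_of_subset_of_nonneg hsub ?_)
    intro i _ _
    positivity
  -- filtered set ⊆ Icc 1 ((n-1)/2)
  have hsubset : ((Icc 1 n).filter fun k : ℕ =>
      (1 : ℝ) / (k : ℝ) > (1 / (n : ℝ)) * ∑ i ∈ Icc 1 n, (1 : ℝ) / (i : ℝ)) ⊆
      Icc 1 ((n - 1) / 2) := by
    intro k hk
    simp only [mem_filter, mem_Icc] at hk ⊢
    obtain ⟨⟨hk1, hkn⟩, hgt⟩ := hk
    refine ⟨hk1, ?_⟩
    have hk0 : (0 : ℝ) < k := by exact_mod_cast hk1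
    have h2n : (2 : ℝ) / n ≤ (1 / (n : ℝ)) * ∑ i ∈ Icc 1 n, (1 : ℝ) / (i : ℝ) := by
      rw [div_eq_mul_inv, mul_comm, ← one_div]
      exact mul_le_mul_of_nonneg_left hH (by positivity)
    have : (2 : ℝ) / n < 1 / k := lt_of_le_of_lt h2n hgt
    have hlt : (2 : ℝ) * k < n := by
      rw [div_lt_div_iff₀ hn0 hk0] at this
      linarith
    have : 2 * k < n := by exact_mod_cast hlt
    omega
  have hcard : ((Icc 1 n).filter fun k : ℕ =>
      (1 : ℝ) / (k : ℝ) > (1 / (n : ℝ)) * ∑ i ∈ Icc 1 n, (1 : ℝ) / (i : ℝ)).card ≤ (n - 1) / 2 := by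
    simpa using Finset.card_le_card hsubset
  have hlt : 2 * ((n - 1) / 2) < n := by omega
  have : (((n - 1) / 2 : ℕ) : ℝ) < (n : ℝ) / 2 := by
    rw [lt_div_iff₀ (by norm_num : (0:ℝ) < 2)]
    exact_mod_cast by omega
  exact lt_of_le_of_lt (by exact_mod_cast hcard) this
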